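/- arXiv:2004.11998 — 2 statements merged into one kernel-verified Lean document; each statement's English description precedes it below -/
import Mathlib

section
/- Let 𝔽_q be a finite field with q elements, k ≥ 1, n = q^k − 1, and let X = 𝒞 ⊆ 𝔽_q^n be a dual Hamming code, i.e., the cyclic code generated by g(x) = (x^n−1)/g⊥(x) for a primitive monic irreducible g⊥ of degree k. Let w ∈ 𝔽_q^n be the word with g(x) = Σ_{j=1}^n w_j x^{j−1}, and fix any linear order on 𝔽_q (used to define maj and cdes). Then (X, X^maj(t), C) exhibits the cyclic sieving phenomenon if and only if gcd(n, cdes(w)) = 1. -/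
/-- The (leftward) cyclic shift on words of length `n`:
`c(w₁,…,wₙ) = (w₂,…,wₙ,w₁)`. -/
def cshift {A : Type*} {n : ℕ} (w : Fin n → A) : Fin n → A :=
  fun i => w ⟨((i : ℕ) + 1) % n, Nat.mod_lt _ i.pos⟩

/-- The major index of a word: `maj w = Σ_{1 ≤ i ≤ n-1, w_i > w_{i+1}} i`
(here positions are 0-indexed, so position `i : Fin n` is the `(i+1)`-st letter). -/
def majIdx {A : Type*} [LinearOrder A] {n : ℕ} (w : Fin n → A) : ℕ :=
  ∑ i : Fin n,
    if h : (i : ℕ) + 1 < n then (if w ⟨(i : ℕ) + 1, h⟩ < w i then (i : ℕ) + 1 else 0) else 0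

/-- The number of cyclic descents of a word, `cdes w = #{i : w_i > w_{i+1}}`
with indices read cyclically (`w_{n+1} := w_1`). -/
def cdes {A : Type*} [LinearOrder A] {n : ℕ} (w : Fin n → A) : ℕ :=
  (Finset.univ.filter fun i : Fin n =>
    w ⟨((i : ℕ) + 1) % n, Nat.mod_lt _ i.pos⟩ < w i).card

/-- The inversion number of a word: `inv w = #{(i,j) : i < j, w_i > w_j}`. -/
def invNum {A : Type*} [LinearOrder A] {n : ℕ} (w : Fin n → A) : ℕ :=
  (Finset.univ.filter fun p : Fin n × Fin n => p.1 < p.2 ∧ w p.2 < w p.1).card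

/-- The Hamming weight of a binary word: the number of ones. -/
def wt {n : ℕ} (w : Fin n → Bool) : ℕ :=
  (Finset.univ.filter fun i => w i = true).card

/-- The triple `(X, Σ_{x ∈ X} t^{stat x}, C)` exhibits the cyclic sieving phenomenon,
where `C` is the cyclic group of order `n` generated by the cyclic shift `c` acting on `X`:
for every `d`, the number of fixed points of `c^d` on `X` equals the evaluation of
`Σ_{x ∈ X} t^{stat x}` at `t = ζ^d`, with `ζ = exp(2πi/n)`. -/
def exhibitsCSP {A : Type*} [DecidableEq A] {n : ℕ} (X : Finset (Fin n → A))
    (stat : (Fin n → A) → ℕ) : Prop :=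
  ∀ d : ℕ,
    ((X.filter fun v => cshift^[d] v = v).card : ℂ) =
      ∑ v ∈ X, Complex.exp (2 * (Real.pi : ℂ) * Complex.I / n) ^ (d * stat v)

/-- The polynomial `w₁ + w₂ x + ⋯ + wₙ x^{n-1}` associated to a word `w ∈ F^n` under
the standard identification of `F^n` with `F[x]/(xⁿ-1)`.  A word `w` belongs to the
cyclic code generated by a monic divisor `g` of `xⁿ - 1` exactly when `g ∣ wordPoly w`. -/
noncomputable def wordPoly {F : Type*} [CommRing F] {n : ℕ} (w : Fin n → F) :
    Polynomial F :=
  ∑ i : Fin n, Polynomial.C (w i) * Polynomial.X ^ (i : ℕ)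


/-!
Shifting a word cyclically multiplies its polynomial by `x⁻¹` modulo `xⁿ - 1`. Hence
`cᵈ w = w` forces `g⊥ ∣ xᵈ - 1`, i.e. `θᵈ = 1` for the primitive root `θ` of `g⊥`, so the
shifts `cʲ w`, `0 ≤ j < n`, are `n` distinct nonzero codewords. The code has only
`q^k = n + 1` words (they are the `g h` with `deg h < k`), so it is `{0}` together with this
single free orbit, and the zero word contributes `1` to both sides of every sieving identity.

On the orbit, a shift lowers `maj` by `cdes w` modulo `n`, so
`∑ ζ^(d maj) = ζ^(d maj w) ∑ⱼ ζ^(-j d cdes w)`, which is `n ζ^(d maj w)` or `0` according as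
`n ∣ d cdes w`, while `cᵈ` fixes `n` or `0` words of the orbit according as `n ∣ d`. The two
agree for every `d` exactly when `n` and `cdes w` are coprime.
-/
open Finset Polynomial

section CyclicShift

open Fin.NatCast

variable {A : Type*} {n : ℕ} [NeZero n]

theorem cshift_apply (v : Fin n → A) (i : Fin n) : cshift v i = v (i + 1) := by
  simp only [cshift]
  congr 1
  ext
  simp [Fin.val_add]

theorem cshift_iterate_apply (v : Fin n → A) (j : ℕ) (i : Fin n) :
    cshift^[j] v i = v (i + (j : Fin n)) := by
  induction j generalizing v with
  | zero => simp
  | succ j ih => rw [Function.iterate_succ_apply, ih, cshift_apply, Nat.cast_succ, add_assoc]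

theorem cshift_iterate_eq_self_of_dvd (v : Fin n → A) {d : ℕ} (hd : n ∣ d) :
    cshift^[d] v = v := by
  funext i
  rw [cshift_iterate_apply, Fin.natCast_eq_zero.mpr hd, add_zero]

theorem cshift_injective : Function.Injective (cshift : (Fin n → A) → Fin n → A) := by
  intro v u h
  funext i
  simpa [cshift_apply] using congr_fun h (i - 1)

end CyclicShift

section MajorIndex

variable {A : Type*} [LinearOrder A] {n : ℕ} [NeZero n]

-- `i + 1` wraps around in `Fin n`, so the cyclic descent at the last position gets weight `0`,
-- which is exactly how `majIdx` ignores it.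
theorem majIdx_eq_sum (v : Fin n → A) :
    majIdx v = ∑ i : Fin n, if v (i + 1) < v i then ((i + 1 : Fin n) : ℕ) else 0 := by
  refine sum_congr rfl fun i _ => ?_
  have hval : ((i + 1 : Fin n) : ℕ) = ((i : ℕ) + 1) % n := by simp [Fin.val_add]
  by_cases h : (i : ℕ) + 1 < n
  · have hsucc : (⟨(i : ℕ) + 1, h⟩ : Fin n) = i + 1 := by ext; rw [hval, Nat.mod_eq_of_lt h]
    rw [dif_pos h, hsucc, hval, Nat.mod_eq_of_lt h]
  · have hlast : ((i + 1 : Fin n) : ℕ) = 0 := by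
      rw [hval, show (i : ℕ) + 1 = n by omega, Nat.mod_self]
    simp [h, hlast]

theorem majIdx_cshift (v : Fin n → A) :
    majIdx (cshift v) = ∑ i : Fin n, if v (i + 1) < v i then (i : ℕ) else 0 := by
  rw [majIdx_eq_sum]
  exact Fintype.sum_equiv (Equiv.addRight 1) _ _ fun _ => by simp only [cshift_apply]; rfl

theorem cdes_eq_sum (v : Fin n → A) :
    cdes v = ∑ i : Fin n, if v (i + 1) < v i then 1 else 0 := by
  rw [cdes, card_filter]
  exact sum_congr rfl fun i _ => by rw [← cshift_apply v i]; rfl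

theorem cdes_cshift (v : Fin n → A) : cdes (cshift v) = cdes v := by
  rw [cdes_eq_sum, cdes_eq_sum]
  exact Fintype.sum_equiv (Equiv.addRight 1) _ _ fun _ => by simp only [cshift_apply]; rfl

theorem majIdx_cshift_add_cdes_modEq (v : Fin n → A) :
    majIdx (cshift v) + cdes v ≡ majIdx v [MOD n] := by
  rw [← ZMod.natCast_eq_natCast_iff, Nat.cast_add, majIdx_cshift, cdes_eq_sum, majIdx_eq_sum]
  push_cast [Nat.cast_sum, Nat.cast_ite]
  rw [← sum_add_distrib]
  refine sum_congr rfl fun i _ => ?_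
  split_ifs
  -- modulo `n` the wrap-around weight `0` of the last position is its naive weight `n`
  · simp [Fin.val_add, ZMod.natCast_mod]
  · simp

theorem majIdx_cshift_iterate_add_modEq (v : Fin n → A) (j : ℕ) :
    majIdx (cshift^[j] v) + j * cdes v ≡ majIdx v [MOD n] := by
  induction j generalizing v with
  | zero => simp [Nat.ModEq.refl]
  | succ j ih =>
    have h := (ih (cshift v)).add_right (cdes v)
    rw [cdes_cshift, add_assoc, ← Nat.succ_mul] at h
    exact h.trans (majIdx_cshift_add_cdes_modEq v)

end MajorIndex

def cshiftOrbit {A : Type*} [DecidableEq A] {n : ℕ} (w : Fin n → A) : Finset (Fin n → A) :=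
  (range n).image fun j => cshift^[j] w

theorem Nat.coprime_of_forall_dvd_mul {n c : ℕ} (hn : n ≠ 0) (h : ∀ d, n ∣ d * c → n ∣ d) :
    n.Coprime c := by
  refine Nat.coprime_of_dvd fun p hp hpn hpc => ?_
  have hdvd : n ∣ n / p * c := by
    obtain ⟨e, rfl⟩ := hpc
    rw [← mul_assoc, Nat.div_mul_cancel hpn]
    exact dvd_mul_right n e
  have hlt : n / p < n := Nat.div_lt_self (Nat.pos_of_ne_zero hn) hp.one_lt
  exact absurd (Nat.le_of_dvd (Nat.div_pos (Nat.le_of_dvd (Nat.pos_of_ne_zero hn) hpn)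
    hp.pos) (h _ hdvd)) (not_le.mpr hlt)

section CyclicSieving

variable {A : Type*} {n : ℕ} [NeZero n]

theorem cshiftOrbit_injOn [DecidableEq A] {w : Fin n → A} (hw : ∀ d, cshift^[d] w = w ↔ n ∣ d) :
    Set.InjOn (fun j => cshift^[j] w) (range n) := by
  intro i hi j hj hij
  wlog hle : i ≤ j generalizing i j
  · exact (this hj hi hij.symm (le_of_not_ge hle)).symm
  obtain ⟨d, rfl⟩ := Nat.exists_eq_add_of_le hle
  have hd : cshift^[d] w = w := by
    refine cshift_injective.iterate i ?_
    simpa [← Function.iterate_add_apply] using hij.symm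
  have := Nat.eq_zero_of_dvd_of_lt ((hw d).mp hd) (by simp at hj; omega)
  omega

theorem card_cshiftOrbit [DecidableEq A] {w : Fin n → A} (hw : ∀ d, cshift^[d] w = w ↔ n ∣ d) :
    #(cshiftOrbit w) = n := by
  rw [cshiftOrbit, card_image_of_injOn (cshiftOrbit_injOn hw), card_range]

theorem card_filter_cshiftOrbit [DecidableEq A] {w : Fin n → A}
    (hw : ∀ d, cshift^[d] w = w ↔ n ∣ d) (d : ℕ) :
    #{v ∈ cshiftOrbit w | cshift^[d] v = v} = if n ∣ d then n else 0 := by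
  have hfix : ∀ v ∈ cshiftOrbit w, cshift^[d] v = v ↔ n ∣ d := by
    simp only [cshiftOrbit, mem_image]
    rintro _ ⟨j, -, rfl⟩
    rw [← Function.iterate_add_apply, add_comm, Function.iterate_add_apply,
      (cshift_injective.iterate j).eq_iff, hw]
  split_ifs with hd
  · rw [filter_true_of_mem fun v hv => (hfix v hv).mpr hd, card_cshiftOrbit hw]
  · rw [filter_false_of_mem fun v hv => mt (hfix v hv).mp hd, card_empty]

variable [LinearOrder A] {K : Type*} [Field K] {ζ : K}

theorem pow_majIdx_cshift_iterate (hζ : IsPrimitiveRoot ζ n) (v : Fin n → A) (d j : ℕ) :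
    ζ ^ (d * majIdx (cshift^[j] v)) = ζ ^ (d * majIdx v) * ((ζ ^ (d * cdes v))⁻¹) ^ j := by
  have hmod : ζ ^ (d * (majIdx (cshift^[j] v) + j * cdes v)) = ζ ^ (d * majIdx v) := by
    rw [(hζ.isOfFinOrder (NeZero.ne n)).pow_eq_pow_iff_modEq, ← hζ.eq_orderOf]
    exact (majIdx_cshift_iterate_add_modEq v j).mul_left d
  rw [inv_pow, eq_mul_inv_iff_mul_eq₀ (pow_ne_zero _ (pow_ne_zero _ (hζ.ne_zero (NeZero.ne n)))),
    ← hmod]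
  ring

theorem sum_cshiftOrbit_pow_majIdx {w : Fin n → A} (hw : ∀ d, cshift^[d] w = w ↔ n ∣ d)
    (hζ : IsPrimitiveRoot ζ n) (d : ℕ) :
    ∑ v ∈ cshiftOrbit w, ζ ^ (d * majIdx v) =
      ζ ^ (d * majIdx w) * if n ∣ d * cdes w then (n : K) else 0 := by
  rw [cshiftOrbit, sum_image (cshiftOrbit_injOn hw)]
  simp only [pow_majIdx_cshift_iterate hζ]
  rw [← mul_sum]
  congr 1
  split_ifs with hd
  · simp [(hζ.pow_eq_one_iff_dvd _).mpr hd]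
  · have hy : (ζ ^ (d * cdes w))⁻¹ ≠ 1 := by
      rwa [ne_eq, inv_eq_one, hζ.pow_eq_one_iff_dvd]
    rw [geom_sum_eq hy, inv_pow, ← pow_mul, mul_comm, pow_mul, hζ.pow_eq_one, one_pow, inv_one,
      sub_self, zero_div]

theorem exhibitsCSP_cshiftOrbit_majIdx_iff {w : Fin n → A} (hw : ∀ d, cshift^[d] w = w ↔ n ∣ d) :
    exhibitsCSP (cshiftOrbit w) majIdx ↔ n.Coprime (cdes w) := by
  have hζ := Complex.isPrimitiveRoot_exp n (NeZero.ne n)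
  simp only [exhibitsCSP, card_filter_cshiftOrbit hw, sum_cshiftOrbit_pow_majIdx hw hζ]
  refine ⟨fun h => Nat.coprime_of_forall_dvd_mul (NeZero.ne n) fun d hd => ?_, fun h d => ?_⟩
  · by_contra hnd
    have := h d
    rw [if_neg hnd, if_pos hd] at this
    simp [hζ.ne_zero (NeZero.ne n), NeZero.ne n] at this
  · by_cases hd : n ∣ d
    · rw [if_pos hd, if_pos (hd.mul_right _), (hζ.pow_eq_one_iff_dvd _).mpr (hd.mul_right _),
        one_mul]
    · rw [if_neg hd, if_neg (mt h.dvd_of_dvd_mul_right hd), mul_zero, Nat.cast_zero]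

end CyclicSieving

theorem exhibitsCSP_insert_iff {A : Type*} [DecidableEq A] {n : ℕ} {X : Finset (Fin n → A)}
    {stat : (Fin n → A) → ℕ} {z : Fin n → A} (hz : cshift z = z) (hstat : stat z = 0) :
    exhibitsCSP (insert z X) stat ↔ exhibitsCSP X stat := by
  by_cases hzX : z ∈ X
  · rw [insert_eq_of_mem hzX]
  refine forall_congr' fun d => ?_
  have hfix : cshift^[d] z = z := Function.iterate_fixed hz d
  rw [filter_insert, if_pos hfix, card_insert_of_notMem (fun h => hzX (mem_filter.mp h).1),
    sum_insert hzX, hstat, mul_zero, pow_zero, Nat.cast_succ, add_comm, add_left_cancel_iff]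

section WordPoly

variable {R : Type*} [CommRing R] {n : ℕ}

theorem coeff_wordPoly (v : Fin n → R) (j : ℕ) :
    (wordPoly v).coeff j = if h : j < n then v ⟨j, h⟩ else 0 := by
  simp only [wordPoly, finsetSum_coeff, coeff_C_mul, coeff_X_pow, mul_ite, mul_one, mul_zero]
  split_ifs with h
  · rw [sum_eq_single ⟨j, h⟩ (fun b _ hb => if_neg fun hbj => hb (Fin.ext hbj.symm)) (by simp)]
    simp
  · exact sum_eq_zero fun b _ => if_neg fun hbj : j = b => h (hbj ▸ b.isLt)

theorem degree_wordPoly_lt (v : Fin n → R) : (wordPoly v).degree < n := by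
  rw [degree_lt_iff_coeff_zero]
  intro j hj
  rw [coeff_wordPoly, dif_neg (not_lt.mpr hj)]

theorem wordPoly_injective : Function.Injective (wordPoly : (Fin n → R) → R[X]) := by
  intro v u h
  funext i
  simpa [coeff_wordPoly] using congr_arg (coeff · i) h

theorem wordPoly_zero : wordPoly (0 : Fin n → R) = 0 := by
  simp [wordPoly]

theorem wordPoly_eq_of_coeff {p : R[X]} (hp : p.degree < n) {w : Fin n → R}
    (hw : ∀ i : Fin n, w i = p.coeff i) : wordPoly w = p := by
  ext j
  rw [coeff_wordPoly]
  split_ifs with h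
  · exact hw ⟨j, h⟩
  · exact (coeff_eq_zero_of_degree_lt (hp.trans_le (by exact_mod_cast not_lt.mp h))).symm

variable [NeZero n]

theorem monic_X_pow_sub_one : (X ^ n - 1 : R[X]).Monic := by
  simpa using monic_X_pow_sub_C (1 : R) (NeZero.ne n)

theorem X_mul_wordPoly_cshift (v : Fin n → R) :
    X * wordPoly (cshift v) = wordPoly v + C (v 0) * (X ^ n - 1) := by
  ext (_ | j)
  · simp [coeff_wordPoly, Nat.pos_of_neZero n, (NeZero.ne n).symm]
  · simp only [coeff_X_mul, coeff_add, coeff_C_mul, coeff_sub, coeff_X_pow, coeff_one,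
      coeff_wordPoly, cshift]
    rcases lt_trichotomy (j + 1) n with h | rfl | h
    · simp [h, Nat.mod_eq_of_lt h, show j < n by omega, h.ne]
    · simp
    · simp [show ¬j < n by omega, show ¬j + 1 < n by omega, h.ne']

theorem X_pow_sub_one_dvd_X_pow_mul_wordPoly_cshift_iterate_sub (v : Fin n → R) (j : ℕ) :
    (X ^ n - 1 : R[X]) ∣ X ^ j * wordPoly (cshift^[j] v) - wordPoly v := by
  induction j generalizing v with
  | zero => simp
  | succ j ih =>
    rw [Function.iterate_succ_apply]
    have hstep : (X ^ n - 1 : R[X]) ∣ X * wordPoly (cshift v) - wordPoly v :=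
      ⟨C (v 0), by rw [X_mul_wordPoly_cshift]; ring⟩
    convert dvd_add ((ih (cshift v)).mul_left X) hstep using 1
    ring

theorem dvd_wordPoly_cshift {g : R[X]} (hg : g ∣ X ^ n - 1) {v : Fin n → R}
    (hv : g ∣ wordPoly v) : g ∣ wordPoly (cshift v) := by
  have hcop : IsCoprime g X := by
    refine IsCoprime.of_isCoprime_of_dvd_left ?_ hg
    refine ⟨-1, X ^ (n - 1), ?_⟩
    rw [← pow_succ, Nat.sub_add_cancel (Nat.pos_of_neZero n)]
    ring
  refine hcop.dvd_of_dvd_mul_left ?_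
  rw [X_mul_wordPoly_cshift]
  exact dvd_add hv (hg.mul_left _)

end WordPoly

section DualHamming

variable {F : Type*} [Field F] {n : ℕ}

theorem card_le_of_forall_dvd_wordPoly [Fintype F] {g : F[X]} {k : ℕ} (hg : g.Monic)
    (hdeg : g.natDegree + k = n) {X : Finset (Fin n → F)} (hX : ∀ v ∈ X, g ∣ wordPoly v) :
    #X ≤ Fintype.card F ^ k := by
  have hquot : ∀ v ∈ X, g * (wordPoly v /ₘ g) = wordPoly v ∧ (wordPoly v /ₘ g).degree < k := by
    intro v hv
    have hmul : g * (wordPoly v /ₘ g) = wordPoly v := by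
      simpa [(modByMonic_eq_zero_iff_dvd hg).mpr (hX v hv)] using modByMonic_add_div (wordPoly v) g
    refine ⟨hmul, ?_⟩
    by_cases hq : wordPoly v /ₘ g = 0
    · simp [hq]
    · have hp : wordPoly v ≠ 0 := hmul ▸ mul_ne_zero hg.ne_zero hq
      have hlt := (natDegree_lt_iff_degree_lt hp).mpr (degree_wordPoly_lt v)
      rw [← hmul, natDegree_mul hg.ne_zero hq] at hlt
      exact (natDegree_lt_iff_degree_lt hq).mp (by omega)
  calc #X ≤ #(univ : Finset (Fin k → F)) := by
        refine card_le_card_of_injOn (fun v i => (wordPoly v /ₘ g).coeff i)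
          (fun _ _ => mem_coe.mpr (mem_univ _)) fun v hv u hu h => wordPoly_injective ?_
        rw [← (hquot v hv).1, ← (hquot u hu).1]
        congr 1
        ext i
        by_cases hi : i < k
        · exact congr_fun h ⟨i, hi⟩
        · rw [coeff_eq_zero_of_degree_lt ((hquot v hv).2.trans_le (by exact_mod_cast not_lt.mp hi)),
            coeff_eq_zero_of_degree_lt ((hquot u hu).2.trans_le (by exact_mod_cast not_lt.mp hi))]
    _ = Fintype.card F ^ k := by simp

variable [NeZero n] {g gperp : F[X]}

theorem cshift_iterate_eq_self_iff_of_orderOf_root (hg : g * gperp = X ^ n - 1)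
    (hprim : orderOf (AdjoinRoot.root gperp) = n) {w : Fin n → F} (hw : wordPoly w = g) (d : ℕ) :
    cshift^[d] w = w ↔ n ∣ d := by
  refine ⟨fun hfix => ?_, fun hd => cshift_iterate_eq_self_of_dvd w hd⟩
  have hg0 : g ≠ 0 := left_ne_zero_of_mul (hg ▸ (monic_X_pow_sub_one (R := F) (n := n)).ne_zero)
  have hdvd : g * gperp ∣ g * (X ^ d - 1) := by
    have := X_pow_sub_one_dvd_X_pow_mul_wordPoly_cshift_iterate_sub w d
    rwa [hfix, hw, ← hg, show X ^ d * g - g = g * (X ^ d - 1) by ring] at this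
  have hroot : AdjoinRoot.root gperp ^ d = 1 := by
    rw [← sub_eq_zero, ← AdjoinRoot.mk_X, ← map_pow, ← map_one (AdjoinRoot.mk gperp), ← map_sub,
      AdjoinRoot.mk_eq_zero]
    exact (mul_dvd_mul_iff_left hg0).mp hdvd
  exact hprim ▸ orderOf_dvd_of_pow_eq_one hroot

theorem natDegree_add_natDegree_of_mul_eq_X_pow_sub_one (hg : g * gperp = X ^ n - 1) :
    g.natDegree + gperp.natDegree = n := by
  have hne : g * gperp ≠ 0 := hg ▸ (monic_X_pow_sub_one (R := F) (n := n)).ne_zero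
  rw [← natDegree_mul (left_ne_zero_of_mul hne) (right_ne_zero_of_mul hne), hg, ← C_1,
    natDegree_X_pow_sub_C]

theorem eq_insert_zero_cshiftOrbit [Fintype F] [DecidableEq F]
    (hn : n + 1 = Fintype.card F ^ gperp.natDegree) (hmonic : gperp.Monic)
    (hprim : orderOf (AdjoinRoot.root gperp) = n) (hg : g * gperp = X ^ n - 1)
    {C : Finset (Fin n → F)} (hC : ∀ v, v ∈ C ↔ g ∣ wordPoly v) {w : Fin n → F}
    (hw : wordPoly w = g) : C = insert 0 (cshiftOrbit w) := by
  have hXn : (X ^ n - 1 : F[X]).Monic := monic_X_pow_sub_one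
  have hgmonic : g.Monic := hmonic.of_mul_monic_right (hg ▸ hXn)
  have hfix := cshift_iterate_eq_self_iff_of_orderOf_root hg hprim hw
  have horbit : cshiftOrbit w ⊆ C := by
    simp only [cshiftOrbit, image_subset_iff, hC]
    intro j _
    exact Function.Iterate.rec (g ∣ wordPoly ·) (hw ▸ dvd_rfl)
      (fun _ => dvd_wordPoly_cshift ⟨gperp, hg.symm⟩) j
  have hzero : (0 : Fin n → F) ∉ cshiftOrbit w := by
    simp only [cshiftOrbit, mem_image, not_exists, not_and]
    intro j _ hj
    have : w = 0 := cshift_injective.iterate j (hj.trans (Function.iterate_fixed rfl j).symm)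
    exact hgmonic.ne_zero (by rw [← hw, this, wordPoly_zero])
  have hsub : insert 0 (cshiftOrbit w) ⊆ C :=
    insert_subset ((hC 0).mpr (by simp [wordPoly_zero])) horbit
  refine (eq_of_subset_of_card_le hsub ?_).symm
  rw [card_insert_of_notMem hzero, card_cshiftOrbit hfix, hn]
  exact card_le_of_forall_dvd_wordPoly hgmonic
    (natDegree_add_natDegree_of_mul_eq_X_pow_sub_one hg) fun v hv => (hC v).mp hv

end DualHamming

theorem stmt15_general {F : Type*} [Field F] [Fintype F] [LinearOrder F] (k : ℕ) (hk : 1 ≤ k)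
    (n : ℕ) (hn : n = Fintype.card F ^ k - 1)
    (gperp : Polynomial F) (hmonic : gperp.Monic)
    (hdeg : gperp.natDegree = k)
    (hprim : orderOf (AdjoinRoot.root gperp) = n)
    (g : Polynomial F) (hg : g * gperp = Polynomial.X ^ n - 1)
    (X : Finset (Fin n → F)) (hX : ∀ v : Fin n → F, v ∈ X ↔ g ∣ wordPoly v)
    (w : Fin n → F) (hw : ∀ i : Fin n, w i = g.coeff (i : ℕ)) :
    exhibitsCSP X majIdx ↔ Nat.gcd n (cdes w) = 1 := by
  have hq : 2 ≤ Fintype.card F ^ k :=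
    Fintype.one_lt_card.trans_le (Nat.le_self_pow (by omega) _)
  have : NeZero n := ⟨by omega⟩
  have hgdeg := natDegree_add_natDegree_of_mul_eq_X_pow_sub_one hg
  have hwg : wordPoly w = g :=
    wordPoly_eq_of_coeff (degree_le_natDegree.trans_lt (by exact_mod_cast (by omega))) hw
  rw [eq_insert_zero_cshiftOrbit (by rw [hdeg]; omega) hmonic hprim hg hX hwg,
    exhibitsCSP_insert_iff rfl (by simp [majIdx])]
  exact exhibitsCSP_cshiftOrbit_majIdx_iff (cshift_iterate_eq_self_iff_of_orderOf_root hg hprim hwg)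

/-- for X = C a dual Hamming code of dimension k and length n = q^k - 1
(the cyclic code generated by g = (x^n-1)/gperp with gperp primitive monic irreducible
of degree k), with w the word corresponding to g and any linear order fixed on F_q,
the triple (X, X^maj(t), C) exhibits the CSP if and only if gcd(n, cdes w) = 1. -/
theorem stmt15 {F : Type*} [Field F] [Fintype F] [LinearOrder F] (k : ℕ) (hk : 1 ≤ k)
    (n : ℕ) (hn : n = Fintype.card F ^ k - 1)
    (gperp : Polynomial F) (hmonic : gperp.Monic) (hirr : Irreducible gperp)
    (hdeg : gperp.natDegree = k)
    (hprim : orderOf (AdjoinRoot.root gperp) = n)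
    (g : Polynomial F) (hg : g * gperp = Polynomial.X ^ n - 1)
    (X : Finset (Fin n → F)) (hX : ∀ v : Fin n → F, v ∈ X ↔ g ∣ wordPoly v)
    (w : Fin n → F) (hw : ∀ i : Fin n, w i = g.coeff (i : ℕ)) :
    exhibitsCSP X majIdx ↔ Nat.gcd n (cdes w) = 1 :=
  stmt15_general k hk n hn gperp hmonic hdeg hprim g hg X hX w hw
end

section
/- Let q ∈ {2,3}, k ≥ 2, n = q^k − 1, and let g⊥(x) ∈ 𝔽_q[x] be a monic irreducible polynomial of degree k (note g⊥ then divides x^n − 1). Let w = (w_1,…,w_n) ∈ 𝔽_q^n be the word with g(x) := (x^n−1)/g⊥(x) = Σ_{j=1}^n w_j x^{j−1}, and fix any linear order on 𝔽_q (used to define cdes). Then g⊥ is primitive (the image of x in 𝔽_q[x]/(g⊥(x)) has multiplicative order n) if and only if 2·cdes(w) = (q−1)·q^{k−1}. -/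
open Finset Polynomial

def SolvesRecurrenceBelow {R : Type*} [Semiring R] (p : R[X]) (N : ℕ) (s : ℕ → R) : Prop :=
  ∀ m, m + p.natDegree < N → ∑ b ∈ range (p.natDegree + 1), p.coeff b * s (m + b) = 0

namespace SolvesRecurrenceBelow

variable {R : Type*} [CommRing R] {p : R[X]} {N : ℕ}

theorem eq_of_eq_init (hp : p.Monic) {s t : ℕ → R} (hs : SolvesRecurrenceBelow p N s)
    (ht : SolvesRecurrenceBelow p N t) (hinit : ∀ j < p.natDegree, s j = t j) :
    ∀ j < N, s j = t j := by
  intro j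
  induction j using Nat.strong_induction_on with
  | _ j ih =>
  intro hj
  rcases lt_or_ge j p.natDegree with hjd | hjd
  · exact hinit j hjd
  obtain ⟨m, rfl⟩ := Nat.exists_eq_add_of_le' hjd
  have hlow : ∀ b ∈ range p.natDegree, p.coeff b * s (m + b) = p.coeff b * t (m + b) := by
    intro b hb
    rw [mem_range] at hb
    rw [ih (m + b) (by omega) (by omega)]
  have key := (hs m hj).trans (ht m hj).symm
  rw [sum_range_succ, sum_range_succ, sum_congr rfl hlow, hp.coeff_natDegree, one_mul, one_mul]
    at key
  exact add_left_cancel key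

theorem apply_pow {A : Type*} [Ring A] [Algebra R A] (L : A →ₗ[R] R) {γ : A}
    (hγ : aeval γ p = 0) (N : ℕ) : SolvesRecurrenceBelow p N fun j => L (γ ^ j) := by
  intro m _
  have h := congrArg (fun x => L (γ ^ m * x)) hγ
  simpa [aeval_eq_sum_range, mul_sum, map_sum, pow_add, mul_smul_comm] using h

end SolvesRecurrenceBelow

theorem Polynomial.coeff_mul_eq_sum_range {R : Type*} [Semiring R] (p q : R[X]) {k d : ℕ}
    (hq : q.natDegree ≤ k) (hkd : k ≤ d) :
    (q * p).coeff d = ∑ b ∈ range (k + 1), q.coeff b * p.coeff (d - b) := by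
  rw [coeff_mul, Nat.sum_antidiagonal_eq_sum_range_succ fun i j => q.coeff i * p.coeff j]
  refine (sum_subset (range_subset_range.mpr (by omega)) fun b _ hb => ?_).symm
  rw [mem_range] at hb
  rw [coeff_eq_zero_of_natDegree_lt (by omega), zero_mul]

theorem solvesRecurrenceBelow_coeff_of_mul_eq {R : Type*} [CommRing R] {p g : R[X]} {n : ℕ}
    (hp : 0 < p.natDegree) (h : g * p = X ^ n - 1) :
    SolvesRecurrenceBelow p n fun i => g.coeff (n - 1 - i) := by
  intro m hm
  have hcoeff := congrArg (coeff · (n - 1 - m)) h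
  simp only [mul_comm g, coeff_mul_eq_sum_range g p le_rfl (by omega : p.natDegree ≤ n - 1 - m),
    coeff_sub, coeff_X_pow, coeff_one, if_neg (by omega : n - 1 - m ≠ n),
    if_neg (by omega : n - 1 - m ≠ 0), sub_zero] at hcoeff
  rw [← hcoeff]
  refine sum_congr rfl fun b hb => ?_
  rw [mem_range] at hb
  simp only [show n - 1 - (m + b) = n - 1 - m - b by omega]

theorem Polynomial.coeff_zero_ne_zero_of_mul_eq_X_pow_sub_one {R : Type*} [Ring R] [Nontrivial R]
    {g p : R[X]} {n : ℕ} (hn : n ≠ 0) (h : g * p = X ^ n - 1) : g.coeff 0 ≠ 0 := by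
  intro h0
  have h1 := congrArg (coeff · 0) h
  simp only [mul_coeff_zero, h0, zero_mul, coeff_sub, coeff_X_pow, if_neg hn.symm, coeff_one_zero,
    zero_sub, zero_eq_neg] at h1
  exact one_ne_zero h1

namespace AdjoinRoot

section CommRing

variable {R : Type*} [CommRing R] {p g : R[X]} {n : ℕ}

theorem root_pow_eq_one_of_mul_eq (h : g * p = X ^ n - 1) : root p ^ n = 1 := by
  have := congrArg (mk p) h
  rwa [map_mul, mk_self, mul_zero, map_sub, map_pow, mk_X, map_one, eq_comm, sub_eq_zero] at this

theorem exists_linearMap_apply_root_pow (hp : p.Monic) (hp0 : 0 < p.natDegree)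
    (h : g * p = X ^ n - 1) :
    ∃ L : AdjoinRoot p →ₗ[R] R, ∀ i < n, L (root p ^ i) = g.coeff (n - 1 - i) := by
  let pb := powerBasis' hp
  have hdim : pb.dim = p.natDegree := powerBasis'_dim hp
  let L := pb.basis.constr R fun i => g.coeff (n - 1 - i)
  refine ⟨L, (SolvesRecurrenceBelow.apply_pow L (by rw [aeval_eq, mk_self]) n).eq_of_eq_init hp
    (solvesRecurrenceBelow_coeff_of_mul_eq hp0 h) fun j hj => ?_⟩
  have hb : pb.basis ⟨j, hdim ▸ hj⟩ = root p ^ j := by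
    rw [PowerBasis.basis_eq_pow, powerBasis'_gen]
  simp only [L, ← hb, Module.Basis.constr_basis]

end CommRing

variable {F : Type*} [Field F] {p : F[X]} [Fact (Irreducible p)]

theorem exists_linearMap_apply_inv_root_pow {g : F[X]} {n : ℕ} (hp : p.Monic)
    (hp0 : 0 < p.natDegree) (h : g * p = X ^ n - 1) :
    ∃ L : AdjoinRoot p →ₗ[F] F, ∀ j < n, L ((root p)⁻¹ ^ j) = g.coeff j := by
  obtain ⟨L, hL⟩ := exists_linearMap_apply_root_pow hp hp0 h
  refine ⟨L ∘ₗ LinearMap.mulLeft F (root p)⁻¹, fun j hj => ?_⟩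
  have hpow : (root p)⁻¹ ^ (j + 1) = root p ^ (n - 1 - j) := by
    rw [inv_pow, eq_comm, ← eq_inv_of_mul_eq_one_left]
    rw [← pow_add, show n - 1 - j + (j + 1) = n by omega, root_pow_eq_one_of_mul_eq h]
  rw [LinearMap.comp_apply, LinearMap.mulLeft_apply, ← pow_succ', hpow, hL _ (by omega),
    Nat.sub_sub_self (by omega)]

theorem inv_root_notMem_range_algebraMap (hp : p.natDegree ≠ 1) :
    (root p)⁻¹ ∉ Set.range (algebraMap F (AdjoinRoot p)) := by
  rintro ⟨c, hc⟩
  have hroot : p.IsRoot c⁻¹ := (algebraMap F (AdjoinRoot p)).injective <| by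
    rw [map_zero, ← aeval_algebraMap_apply_eq_algebraMap_eval, map_inv₀, hc, inv_inv, aeval_eq,
      mk_self]
  exact hp (natDegree_eq_of_degree_eq_some (degree_eq_one_of_irreducible_of_root Fact.out hroot))

end AdjoinRoot

theorem cdes_eq_count {A : Type*} [LinearOrder A] {n : ℕ} (w : Fin n → A) {f : ℕ → A}
    (hf : Function.Periodic f n) (hw : ∀ i : Fin n, w i = f i) :
    cdes w = Nat.count (fun j => f (j + 1) < f j) n := by
  rw [cdes, Nat.count_eq_card_filter_range, card_filter, card_filter,
    ← Fin.sum_univ_eq_sum_range (fun j => if f (j + 1) < f j then 1 else 0)]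
  refine sum_congr rfl fun i _ => ?_
  rw [hw, hw, hf.map_mod_nat]

theorem Nat.count_mul_of_periodic {p : ℕ → Prop} [DecidablePred p] {e : ℕ}
    (hp : Function.Periodic p e) (m : ℕ) : Nat.count p (m * e) = m * Nat.count p e := by
  induction m with
  | zero => simp
  | succ m ih =>
    have hshift : (fun j => p (m * e + j)) = p := funext fun j => by
      simpa [add_comm] using hp.nat_mul m j
    rw [add_mul, one_mul, Nat.count_add, ih]
    simp only [hshift]
    ring

theorem Function.Periodic.eq_of_dvd_of_coprime_count {p : ℕ → Prop} [DecidablePred p] {e n : ℕ}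
    (hp : Function.Periodic p e) (he : e ∣ n) (hcop : (Nat.count p n).Coprime n) : e = n := by
  obtain ⟨m, rfl⟩ := he
  rw [mul_comm e, Nat.count_mul_of_periodic hp] at hcop
  have hm : m = 1 := (hcop.coprime_dvd_left (dvd_mul_right m _)).eq_one_of_dvd (dvd_mul_right m e)
  rw [hm, mul_one]

theorem count_pow_eq_card_filter_of_orderOf_eq {K : Type*} [Field K] [Fintype K] {β : K}
    (hβ : orderOf β = Fintype.card K - 1) (P : K → Prop) [DecidablePred P] (hP : ¬ P 0) :
    Nat.count (fun j => P (β ^ j)) (Fintype.card K - 1) = #{x | P x} := by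
  classical
  have hinj : Set.InjOn (β ^ ·) (range (orderOf β)) := by
    simpa only [coe_range] using pow_injOn_Iio_orderOf
  have hβ0 : β ≠ 0 := by
    rintro rfl
    have := Fintype.one_lt_card (α := K)
    rw [orderOf_zero] at hβ
    omega
  have himage : (range (orderOf β)).image (β ^ ·) = ({x | x ≠ 0} : Finset K) := by
    refine eq_of_subset_of_card_le (fun x hx => ?_) ?_
    · obtain ⟨j, -, rfl⟩ := mem_image.mp hx
      simpa using pow_ne_zero j hβ0
    · rw [card_image_of_injOn hinj, card_range, filter_ne', card_erase_of_mem (mem_univ 0),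
        card_univ, hβ]
  rw [Nat.count_eq_card_filter_range, ← hβ, ← card_image_of_injOn (hinj.mono (filter_subset _ _)),
    ← filter_image, himage, filter_filter]
  congr 1
  exact filter_congr fun x _ => ⟨And.right, fun h => ⟨fun h0 => hP (h0 ▸ h), h⟩⟩

theorem AddMonoidHom.card_filter_comp_mul_card_of_surjective {G H : Type*} [AddGroup G]
    [Fintype G] [AddGroup H] [Fintype H] [DecidableEq H] {φ : G →+ H}
    (hφ : Function.Surjective φ) (Q : H → Prop) [DecidablePred Q] :
    #{x | Q (φ x)} * Fintype.card H = #{y | Q y} * Fintype.card G := by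
  have hfiber (y : H) : #{x | φ x = y} = #{x | φ x = 0} :=
    card_fiber_eq_of_mem_range φ (hφ y) (hφ 0)
  have hcount (P : H → Prop) [DecidablePred P] :
      #{x | P (φ x)} = #{y | P y} * #{x | φ x = 0} := by
    rw [card_eq_sum_card_fiberwise (f := φ) (t := {y | P y}) fun x hx => by simpa using hx,
      ← smul_eq_mul, ← sum_const]
    refine sum_congr rfl fun y hy => ?_
    rw [← hfiber y, filter_filter]
    exact congrArg card (filter_congr fun x _ => by simp_all)
  have huniv := hcount fun _ => True
  simp only [filter_true, card_univ] at huniv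
  rw [hcount, huniv]
  ring

theorem two_mul_card_filter_lt (A : Type*) [Fintype A] [LinearOrder A] :
    2 * #{p : A × A | p.1 < p.2} = Fintype.card A * Fintype.card A - Fintype.card A := by
  have hswap : #{p : A × A | p.2 < p.1} = #{p : A × A | p.1 < p.2} :=
    card_equiv (Equiv.prodComm A A) (by simp)
  have hsplit : (univ : Finset A).offDiag =
      ({p : A × A | p.1 < p.2} : Finset (A × A)) ∪ ({p : A × A | p.2 < p.1} : Finset _) := by
    ext p
    simp
  rw [← card_univ, ← offDiag_card, hsplit, card_union_of_disjoint, hswap, two_mul]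
  exact disjoint_filter.mpr fun p _ h h' => lt_asymm h h'

section Descents

variable {F K : Type*} [Field F] [Field K] [Algebra F K] {L : K →ₗ[F] F} {β : K}

theorem surjective_prod_comp_mulLeft (hL : L ≠ 0) (hβ : β ∉ Set.range (algebraMap F K)) :
    Function.Surjective ((L ∘ₗ LinearMap.mulLeft F β).prod L) := by
  obtain ⟨z, hz⟩ : ∃ z, L z ≠ 0 := by
    by_contra! h
    exact hL (LinearMap.ext h)
  set y := (L z)⁻¹ • z
  have hy : L y = 1 := by simp [y, hz]
  -- otherwise `L (β * x) = L (β * y) * L x` for all `x`, so `L` kills the unit `β - L (β * y)`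
  obtain ⟨x, hx, hβx⟩ : ∃ x, L x = 0 ∧ L (β * x) ≠ 0 := by
    by_contra! h
    set u := β - algebraMap F K (L (β * y))
    have hu : u ≠ 0 := sub_ne_zero.mpr fun h' => hβ ⟨_, h'.symm⟩
    have hker (x : K) : L (u * x) = 0 := by
      have := h (x - L x • y) (by simp [hy])
      simp only [u, sub_mul, map_sub, mul_sub, mul_smul_comm, map_smul, smul_eq_mul,
        Algebra.algebraMap_eq_smul_one, smul_mul_assoc, one_mul] at this ⊢
      linear_combination this
    simpa [mul_inv_cancel_left₀ hu, hy] using hker (u⁻¹ * y)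
  rintro ⟨a, b⟩
  refine ⟨b • y + ((a - b * L (β * y)) / L (β * x)) • x, Prod.ext ?_ ?_⟩
  · simp [mul_add, hβx]
  · simp [hx, hy]

variable [Fintype F] [LinearOrder F] [Fintype K]

theorem two_mul_card_descents (hL : L ≠ 0) (hβ : β ∉ Set.range (algebraMap F K)) :
    2 * #{x | L (β * x) < L x} =
      (Fintype.card F - 1) * Fintype.card F ^ (Module.finrank F K - 1) := by
  set q := Fintype.card F
  set d := Module.finrank F K
  have hfibers : #{x | L (β * x) < L x} * (q * q) = #{p : F × F | p.1 < p.2} * q ^ d := by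
    have := AddMonoidHom.card_filter_comp_mul_card_of_surjective
      (φ := ((L ∘ₗ LinearMap.mulLeft F β).prod L).toAddMonoidHom)
      (surjective_prod_comp_mulLeft hL hβ) fun p : F × F => p.1 < p.2
    rwa [Fintype.card_prod, Module.card_eq_pow_finrank (K := F) (V := K)] at this
  have hpow : q ^ d = q * q ^ (d - 1) := by
    rw [← pow_succ', Nat.sub_add_cancel (Module.finrank_pos (R := F) (M := K))]
  have hq : 0 < q := Fintype.card_pos
  refine Nat.eq_of_mul_eq_mul_right (Nat.mul_pos hq hq) ?_
  calc 2 * #{x | L (β * x) < L x} * (q * q) = 2 * #{p : F × F | p.1 < p.2} * q ^ d := by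
        rw [mul_assoc, hfibers, mul_assoc]
    _ = (q - 1) * q ^ (d - 1) * (q * q) := by
        rw [two_mul_card_filter_lt, hpow, ← Nat.mul_sub_one]
        ring

theorem two_mul_count_descents_of_orderOf_eq (hord : orderOf β = Fintype.card K - 1)
    (hL : L ≠ 0) (hβ : β ∉ Set.range (algebraMap F K)) :
    2 * Nat.count (fun j => L (β ^ (j + 1)) < L (β ^ j)) (Fintype.card K - 1) =
      (Fintype.card F - 1) * Fintype.card F ^ (Module.finrank F K - 1) := by
  simp only [pow_succ']
  rw [count_pow_eq_card_filter_of_orderOf_eq hord (fun x => L (β * x) < L x) (by simp),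
    two_mul_card_descents hL hβ]

end Descents

theorem Nat.coprime_pow_pow_sub_one {q : ℕ} (hq : 0 < q) (a : ℕ) {k : ℕ} (hk : 0 < k) :
    Nat.Coprime (q ^ a) (q ^ k - 1) :=
  Nat.Coprime.pow_left a <| Nat.Coprime.coprime_dvd_left (dvd_pow_self q hk.ne') <|
    (Nat.coprime_self_sub_right (Nat.one_le_pow _ _ hq)).mpr (Nat.coprime_one_right _)

theorem dvd_pow_of_two_mul_eq {q k c : ℕ} (hq : q = 2 ∨ q = 3)
    (h : 2 * c = (q - 1) * q ^ (k - 1)) : c ∣ q ^ (k - 1) := by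
  rcases hq with rfl | rfl
  · exact ⟨2, by norm_num at h; linarith⟩
  · exact ⟨1, by norm_num at h; linarith⟩

/-- let q ∈ {2,3}, k ≥ 2, n = q^k - 1, gperp monic irreducible of degree
k in F_q[x] (which then divides x^n - 1), g = (x^n - 1)/gperp with corresponding word
w, and fix any linear order on F_q.  Then gperp is primitive if and only if
2·cdes(w) = (q-1)·q^{k-1}. -/
theorem stmt17 {F : Type*} [Field F] [Fintype F] [LinearOrder F]
    (hq : Fintype.card F = 2 ∨ Fintype.card F = 3) (k : ℕ) (hk : 2 ≤ k)
    (n : ℕ) (hn : n = Fintype.card F ^ k - 1)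
    (gperp : Polynomial F) (hmonic : gperp.Monic) (hirr : Irreducible gperp)
    (hdeg : gperp.natDegree = k)
    (g : Polynomial F) (hg : g * gperp = Polynomial.X ^ n - 1)
    (w : Fin n → F) (hw : ∀ i : Fin n, w i = g.coeff (i : ℕ)) :
    orderOf (AdjoinRoot.root gperp) = n ↔
      2 * cdes w = (Fintype.card F - 1) * Fintype.card F ^ (k - 1) := by
  classical
  have : Fact (Irreducible gperp) := ⟨hirr⟩
  let pb := AdjoinRoot.powerBasis' hmonic
  have : Module.Finite F (AdjoinRoot gperp) := pb.finite
  have : Finite (AdjoinRoot gperp) := Module.finite_of_finite F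
  let : Fintype (AdjoinRoot gperp) := Fintype.ofFinite _
  have hrank : Module.finrank F (AdjoinRoot gperp) = k := by
    rw [pb.finrank, AdjoinRoot.powerBasis'_dim, hdeg]
  have hcard : Fintype.card (AdjoinRoot gperp) - 1 = n := by
    rw [Module.card_eq_pow_finrank (K := F), hrank, hn]
  have hn0 : 0 < n := hcard ▸ Nat.sub_pos_of_lt Fintype.one_lt_card
  set β := (AdjoinRoot.root gperp)⁻¹
  obtain ⟨L, hL⟩ := AdjoinRoot.exists_linearMap_apply_inv_root_pow hmonic (by omega) hg
  have hβn : β ^ n = 1 := by rw [inv_pow, AdjoinRoot.root_pow_eq_one_of_mul_eq hg, inv_one]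
  have hordβ : orderOf β = orderOf (AdjoinRoot.root gperp) :=
    orderOf_eq_orderOf_iff.mpr fun m => by simp only [β, inv_pow, inv_eq_one]
  rw [← hordβ, cdes_eq_count w (f := fun j => L (β ^ j))
    (fun j => by simp only [pow_add, hβn, mul_one]) fun i => by rw [hw, hL i i.2]]
  constructor
  · intro hord
    have hL0 : L ≠ 0 := fun h0 => coeff_zero_ne_zero_of_mul_eq_X_pow_sub_one hn0.ne' hg <| by
      rw [← hL 0 hn0, h0, LinearMap.zero_apply]
    rw [← hcard, two_mul_count_descents_of_orderOf_eq (hord.trans hcard.symm) hL0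
      (AdjoinRoot.inv_root_notMem_range_algebraMap (by omega)), hrank]
  · intro hdes
    have hper : Function.Periodic (fun j => L (β ^ (j + 1)) < L (β ^ j)) (orderOf β) :=
      fun j => by simp only [pow_add, pow_orderOf_eq_one, mul_one]
    have hcop := Nat.Coprime.coprime_dvd_left (dvd_pow_of_two_mul_eq hq hdes)
      (Nat.coprime_pow_pow_sub_one Fintype.card_pos _ (k := k) (by omega))
    rw [← hn] at hcop
    exact hper.eq_of_dvd_of_coprime_count (orderOf_dvd_of_pow_eq_one hβn) hcop
end
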